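/- For the bivariate power distribution F(t1,t2) = (t1/b1)^{c1}·(t2/b2)^{c2 + θ log(t1/b1)} on (0,b1)×(0,b2) with θ ≤ 0, c1, c2 > 0, the conditional dynamic CPE satisfies ε̄*_i(X;t1,t2) = c_i(t_j)·m_i^X(t1,t2) for i ≠ j, where c_i(t_j) ∈ (0,1) is a function of t_j alone (specifically, for i=1, c1(t2) = (c1 + θ log(t2/b2))/(1 + c1 + θ log(t2/b2))). -/

import Mathlib

/-!
Both sections of `F` through `(t1, t2)`, normalised by `F t1 t2`, are power profiles `(x / t) ^ α`
on `(0, t)`, with exponent `α = c_i + θ log (t_j / b_j)`, positive because `θ ≤ 0` and `t_j < b_j`.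
For such a profile the mean inactivity time is `t / (α + 1)` and the cumulative past entropy is
`α t / (α + 1) ^ 2`, so their ratio `α / (1 + α)` depends on `t_j` alone and lies in `(0, 1)`.
-/

open MeasureTheory Real Set intervalIntegral

-- `ε̄*(X; t)` and `m^X(t)` for a distribution function `G`
noncomputable def cumPastEntropy (G : ℝ → ℝ) (t : ℝ) : ℝ :=
  -∫ x in (0:ℝ)..t, G x / G t * log (G x / G t)

noncomputable def meanInactivityTime (G : ℝ → ℝ) (t : ℝ) : ℝ :=
  (∫ x in (0:ℝ)..t, G x) / G t

theorem integral_div_rpow {α t : ℝ} (hα : -1 < α) (ht : 0 < t) :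
    ∫ u in (0:ℝ)..t, (u / t) ^ α = t / (α + 1) := by
  have hα1 : α + 1 ≠ 0 := by linarith
  rw [integral_comp_div (fun u => u ^ α) ht.ne', zero_div, div_self ht.ne',
    integral_rpow (Or.inl hα), one_rpow, zero_rpow hα1, smul_eq_mul]
  field_simp
  ring

theorem integral_rpow_mul_log_rpow {α : ℝ} (hα : 0 ≤ α) :
    ∫ u in (0:ℝ)..1, u ^ α * log (u ^ α) = -α / (α + 1) ^ 2 := by
  have hα1 : α + 1 ≠ 0 := by linarith
  -- an antiderivative `u ^ (α + 1) * (α / (α + 1) * log u - α / (α + 1) ^ 2)`, written so that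
  -- its continuity at `0` is visible
  set P : ℝ → ℝ := fun u => α / (α + 1) * (u ^ α * (u * log u)) - α / (α + 1) ^ 2 * (u ^ α * u)
  have hpow : Continuous fun u : ℝ => u ^ α := continuous_id.rpow_const fun _ => Or.inr hα
  have hP : Continuous P := by fun_prop (disch := exact continuous_mul_log)
  have hP' : ∀ u ∈ Ioo (0:ℝ) 1, HasDerivAt P (u ^ α * log (u ^ α)) u := by
    intro u hu
    have hu0 : u ≠ 0 := hu.1.ne'
    have hpow' : HasDerivAt (fun v : ℝ => v ^ α) (α * u ^ (α - 1)) u :=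
      hasDerivAt_rpow_const (Or.inl hu0)
    refine (((hpow'.mul (hasDerivAt_mul_log hu0)).const_mul (α / (α + 1))).sub
      ((hpow'.mul (hasDerivAt_id u)).const_mul (α / (α + 1) ^ 2))).congr_deriv ?_
    rw [rpow_sub_one hu0, log_rpow hu.1, id]
    field_simp
    ring
  rw [integral_eq_sub_of_hasDerivAt_of_le zero_le_one hP.continuousOn hP'
    (hpow.mul_log.intervalIntegrable 0 1)]
  simp [P, neg_div]

theorem integral_div_rpow_mul_log_div_rpow {α t : ℝ} (hα : 0 ≤ α) (ht : 0 < t) :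
    ∫ u in (0:ℝ)..t, (u / t) ^ α * log ((u / t) ^ α) = -(α * t) / (α + 1) ^ 2 := by
  rw [integral_comp_div (fun u => u ^ α * log (u ^ α)) ht.ne', zero_div, div_self ht.ne',
    integral_rpow_mul_log_rpow hα, smul_eq_mul]
  ring

theorem cumPastEntropy_eq_of_eqOn_rpow {G : ℝ → ℝ} {t α : ℝ} (ht : 0 < t) (hα : 0 ≤ α)
    (hGt : G t ≠ 0) (hG : EqOn G (fun x => G t * (x / t) ^ α) (Ioo 0 t)) :
    cumPastEntropy G t = α / (1 + α) * meanInactivityTime G t := by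
  have hentropy : ∫ x in (0:ℝ)..t, G x / G t * log (G x / G t) =
      ∫ x in (0:ℝ)..t, (x / t) ^ α * log ((x / t) ^ α) :=
    integral_congr_Ioo_of_le ht.le fun x hx => by
      simp only [hG hx, mul_div_cancel_left₀ _ hGt]
  have hmean : ∫ x in (0:ℝ)..t, G x = G t * (t / (α + 1)) := by
    rw [integral_congr_Ioo_of_le ht.le hG, intervalIntegral.integral_const_mul,
      integral_div_rpow (by linarith) ht]
  rw [cumPastEntropy, meanInactivityTime, hentropy, hmean,
    integral_div_rpow_mul_log_div_rpow hα ht]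
  have : α + 1 ≠ 0 := by linarith
  field_simp
  ring

theorem div_one_add_self_mem_Ioo {α : ℝ} (hα : 0 < α) : α / (1 + α) ∈ Ioo 0 1 :=
  ⟨by positivity, (div_lt_one (by positivity)).mpr (by linarith)⟩

theorem add_mul_log_div_pos {c θ t b : ℝ} (hc : 0 < c) (hθ : θ ≤ 0) (ht : 0 < t) (htb : t < b) :
    0 < c + θ * log (t / b) :=
  add_pos_of_pos_of_nonneg hc <| mul_nonneg_of_nonpos_of_nonpos hθ <|
    log_nonpos (div_pos ht (ht.trans htb)).le ((div_le_one (ht.trans htb)).mpr htb.le)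

noncomputable def bivariatePowerCDF (b1 b2 c1 c2 θ s1 s2 : ℝ) : ℝ :=
  (s1 / b1) ^ c1 * (s2 / b2) ^ (c2 + θ * log (s1 / b1))

section BivariatePowerCDF

variable {b1 b2 c1 c2 θ t1 t2 x : ℝ}

theorem bivariatePowerCDF_pos (hb1 : 0 < b1) (hb2 : 0 < b2) (ht1 : 0 < t1) (ht2 : 0 < t2) :
    0 < bivariatePowerCDF b1 b2 c1 c2 θ t1 t2 := by
  unfold bivariatePowerCDF
  positivity

theorem bivariatePowerCDF_eq_mul_rpow_fst (hb1 : 0 < b1) (hb2 : 0 < b2) (ht1 : 0 < t1)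
    (ht2 : 0 < t2) (hx : 0 < x) :
    bivariatePowerCDF b1 b2 c1 c2 θ x t2 =
      bivariatePowerCDF b1 b2 c1 c2 θ t1 t2 * (x / t1) ^ (c1 + θ * log (t2 / b2)) := by
  simp only [bivariatePowerCDF, rpow_def_of_pos (div_pos hx hb1), rpow_def_of_pos (div_pos ht2 hb2),
    rpow_def_of_pos (div_pos ht1 hb1), rpow_def_of_pos (div_pos hx ht1), ← exp_add]
  rw [log_div hx.ne' hb1.ne', log_div ht1.ne' hb1.ne', log_div hx.ne' ht1.ne']
  ring_nf

theorem bivariatePowerCDF_eq_mul_rpow_snd (hb2 : 0 < b2) (ht2 : 0 < t2) (hx : 0 < x) :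
    bivariatePowerCDF b1 b2 c1 c2 θ t1 x =
      bivariatePowerCDF b1 b2 c1 c2 θ t1 t2 * (x / t2) ^ (c2 + θ * log (t1 / b1)) := by
  rw [bivariatePowerCDF, bivariatePowerCDF, mul_assoc, ← mul_rpow (by positivity) (by positivity),
    div_mul_div_cancel₀' ht2.ne']

end BivariatePowerCDF

theorem bivariate_power_distribution_CDCPE_general
    (b1 b2 c1 c2 θ t1 t2 : ℝ)
    (hc1 : 0 < c1) (hc2 : 0 < c2) (hθ : θ ≤ 0)
    (ht1 : 0 < t1) (ht1' : t1 < b1) (ht2 : 0 < t2) (ht2' : t2 < b2)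
    (F : ℝ → ℝ → ℝ)
    (hF : ∀ s1 ∈ Set.Ioo (0:ℝ) b1, ∀ s2 ∈ Set.Ioo (0:ℝ) b2,
      F s1 s2 = (s1 / b1) ^ c1 * (s2 / b2) ^ (c2 + θ * Real.log (s1 / b1))) :
    ((c1 + θ * Real.log (t2 / b2)) / (1 + c1 + θ * Real.log (t2 / b2))
        ∈ Set.Ioo (0:ℝ) 1) ∧
    ((c2 + θ * Real.log (t1 / b1)) / (1 + c2 + θ * Real.log (t1 / b1))
        ∈ Set.Ioo (0:ℝ) 1) ∧
    ((-∫ x in (0:ℝ)..t1, (F x t2 / F t1 t2) * Real.log (F x t2 / F t1 t2)) =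
      ((c1 + θ * Real.log (t2 / b2)) / (1 + c1 + θ * Real.log (t2 / b2))) *
        ((∫ x in (0:ℝ)..t1, F x t2) / F t1 t2)) ∧
    ((-∫ x in (0:ℝ)..t2, (F t1 x / F t1 t2) * Real.log (F t1 x / F t1 t2)) =
      ((c2 + θ * Real.log (t1 / b1)) / (1 + c2 + θ * Real.log (t1 / b1))) *
        ((∫ x in (0:ℝ)..t2, F t1 x) / F t1 t2)) := by
  have hb1 := ht1.trans ht1'
  have hb2 := ht2.trans ht2'
  have hF' : ∀ s1 ∈ Ioo 0 b1, ∀ s2 ∈ Ioo 0 b2, F s1 s2 = bivariatePowerCDF b1 b2 c1 c2 θ s1 s2 :=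
    hF
  have hF12 := hF' t1 ⟨ht1, ht1'⟩ t2 ⟨ht2, ht2'⟩
  have hFt : F t1 t2 ≠ 0 := hF12 ▸ (bivariatePowerCDF_pos hb1 hb2 ht1 ht2).ne'
  have hfst : EqOn (F · t2) (fun x => F t1 t2 * (x / t1) ^ (c1 + θ * log (t2 / b2))) (Ioo 0 t1) :=
    fun x hx => by
      dsimp only
      rw [hF' x ⟨hx.1, hx.2.trans ht1'⟩ t2 ⟨ht2, ht2'⟩, hF12,
        bivariatePowerCDF_eq_mul_rpow_fst hb1 hb2 ht1 ht2 hx.1]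
  have hsnd : EqOn (F t1 ·) (fun x => F t1 t2 * (x / t2) ^ (c2 + θ * log (t1 / b1))) (Ioo 0 t2) :=
    fun x hx => by
      dsimp only
      rw [hF' t1 ⟨ht1, ht1'⟩ x ⟨hx.1, hx.2.trans ht2'⟩, hF12,
        bivariatePowerCDF_eq_mul_rpow_snd hb2 ht2 hx.1]
  have hα := add_mul_log_div_pos hc1 hθ ht2 ht2'
  have hβ := add_mul_log_div_pos hc2 hθ ht1 ht1'
  simp only [add_assoc]
  exact ⟨div_one_add_self_mem_Ioo hα, div_one_add_self_mem_Ioo hβ,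
    cumPastEntropy_eq_of_eqOn_rpow ht1 hα.le hFt hfst,
    cumPastEntropy_eq_of_eqOn_rpow ht2 hβ.le hFt hsnd⟩

/-- For the bivariate power distribution
`F(t1,t2) = (t1/b1)^{c1}·(t2/b2)^{c2+θ log(t1/b1)}` on `(0,b1)×(0,b2)` with
`θ ≤ 0`, `c1, c2 > 0`, the conditional dynamic CPE satisfies
`ε̄*_i(X;t1,t2) = c_i(t_j)·m_i^X(t1,t2)` where
`c1(t2) = (c1+θ log(t2/b2))/(1+c1+θ log(t2/b2)) ∈ (0,1)` and symmetrically
`c2(t1) = (c2+θ log(t1/b1))/(1+c2+θ log(t1/b1)) ∈ (0,1)`. -/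
theorem bivariate_power_distribution_CDCPE
    (b1 b2 c1 c2 θ t1 t2 : ℝ)
    (hb1 : 0 < b1) (hb2 : 0 < b2) (hc1 : 0 < c1) (hc2 : 0 < c2) (hθ : θ ≤ 0)
    (ht1 : 0 < t1) (ht1' : t1 < b1) (ht2 : 0 < t2) (ht2' : t2 < b2)
    (F : ℝ → ℝ → ℝ)
    (hF : ∀ s1 ∈ Set.Ioo (0:ℝ) b1, ∀ s2 ∈ Set.Ioo (0:ℝ) b2,
      F s1 s2 = (s1 / b1) ^ c1 * (s2 / b2) ^ (c2 + θ * Real.log (s1 / b1)))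
    (hF0 : ∀ s1 s2, s1 ≤ 0 ∨ s2 ≤ 0 → F s1 s2 = 0) :
    ((c1 + θ * Real.log (t2 / b2)) / (1 + c1 + θ * Real.log (t2 / b2))
        ∈ Set.Ioo (0:ℝ) 1) ∧
    ((c2 + θ * Real.log (t1 / b1)) / (1 + c2 + θ * Real.log (t1 / b1))
        ∈ Set.Ioo (0:ℝ) 1) ∧
    ((-∫ x in (0:ℝ)..t1, (F x t2 / F t1 t2) * Real.log (F x t2 / F t1 t2)) =
      ((c1 + θ * Real.log (t2 / b2)) / (1 + c1 + θ * Real.log (t2 / b2))) *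
        ((∫ x in (0:ℝ)..t1, F x t2) / F t1 t2)) ∧
    ((-∫ x in (0:ℝ)..t2, (F t1 x / F t1 t2) * Real.log (F t1 x / F t1 t2)) =
      ((c2 + θ * Real.log (t1 / b1)) / (1 + c2 + θ * Real.log (t1 / b1))) *
        ((∫ x in (0:ℝ)..t2, F t1 x) / F t1 t2)) :=
  bivariate_power_distribution_CDCPE_general b1 b2 c1 c2 θ t1 t2 hc1 hc2 hθ ht1 ht1' ht2 ht2' F hF
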